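/- arXiv:1604.06991 — 14 statements merged into one kernel-verified Lean document; each statement's English description precedes it below -/
import Mathlib

section
/- Let 0 < α < 1/2 and let 0 ≤ a < 1/2. If (x, y) ∈ A₁ and G_α(x, y) ∈ A₁, and S(x, y) > a, then the point (w, z) = G_α²(x, y) satisfies α·z + (1−α)·w > (4α² − 2α + 2)·a. -/
open Set MeasureTheory Filter

/-- The symmetric tent map. -/
noncomputable def tent (x : ℝ) : ℝ := if x < 1/2 then 2*x else 2 - 2*x

/-- The memory map `G_α (x, y) = (y, τ(α y + (1-α) x))`. -/
noncomputable def G (α : ℝ) (p : ℝ × ℝ) : ℝ × ℝ :=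
  (p.2, tent (α * p.2 + (1 - α) * p.1))

/-- `S(x,y) = α y + (1-α) x`. -/
def S (α : ℝ) (p : ℝ × ℝ) : ℝ := α * p.2 + (1 - α) * p.1

/-- The unit square. -/
def U : Set (ℝ × ℝ) := Icc (0:ℝ) 1 ×ˢ Icc (0:ℝ) 1

/-- The region of the unit square below the line `S = 1/2`. -/
def A1 (α : ℝ) : Set (ℝ × ℝ) := {p | p ∈ U ∧ S α p < 1/2}

/-- The region of the unit square on or above the line `S = 1/2`. -/
def A2 (α : ℝ) : Set (ℝ × ℝ) := {p | p ∈ U ∧ S α p ≥ 1/2}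

theorem stmt1 (α a : ℝ) (hα0 : 0 < α) (hα1 : α < 1/2)
    (ha0 : 0 ≤ a) (ha1 : a < 1/2)
    (p : ℝ × ℝ) (hp : p ∈ A1 α) (hp1 : G α p ∈ A1 α) (hSa : S α p > a) :
    α * ((G α)^[2] p).2 + (1 - α) * ((G α)^[2] p).1 > (4*α^2 - 2*α + 2) * a := by
  obtain ⟨⟨⟨hx0, hx1⟩, hy0, hy1⟩, hs⟩ := hp
  obtain ⟨_, hs1⟩ := hp1
  simp only [S, G] at hs hs1 hSa
  have ht : tent (α * p.2 + (1 - α) * p.1) = 2 * (α * p.2 + (1 - α) * p.1) :=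
    if_pos hs
  rw [ht] at hs1
  have ht1 : tent (α * (2 * (α * p.2 + (1 - α) * p.1)) + (1 - α) * p.2)
      = 2 * (α * (2 * (α * p.2 + (1 - α) * p.1)) + (1 - α) * p.2) := if_pos hs1
  show α * ((G α) ((G α) p)).2 + (1 - α) * ((G α) ((G α) p)).1 > _
  simp only [G, ht, ht1]
  nlinarith [mul_nonneg (mul_nonneg hα0.le (by linarith : (0:ℝ) ≤ 1 - α)) hy0]
end

section
/- Let 0 < α < 1/2. If (x, y) ∈ A₂, then the point (w, z) = G_α(x, y) satisfies α·z + (1−α)·w ≥ 2α². -/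
open Set MeasureTheory Filter

theorem stmt2 (α : ℝ) (hα0 : 0 < α) (hα1 : α < 1/2)
    (p : ℝ × ℝ) (hp : p ∈ A2 α) :
    α * (G α p).2 + (1 - α) * (G α p).1 ≥ 2 * α^2 := by
  obtain ⟨⟨⟨hx0, hx1⟩, ⟨hy0, hy1⟩⟩, hS⟩ := hp
  simp only [G, tent, S] at *
  rw [if_neg (by linarith)]
  nlinarith [mul_nonneg hα0.le hy0, mul_nonneg hα0.le (sub_nonneg.2 hx1)]
end

section
/- Let 0 < α < 1/2. If (x, y) ∈ A₂ and G_α(x, y) ∈ A₁, then the point (w, z) = G_α²(x, y) satisfies α·z + (1−α)·w ≥ 2α(1−α), and 2α(1−α) ≥ 2α². -/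
open Set MeasureTheory Filter

theorem stmt3 (α : ℝ) (hα0 : 0 < α) (hα1 : α < 1/2)
    (p : ℝ × ℝ) (hp : p ∈ A2 α) (hp1 : G α p ∈ A1 α) :
    α * ((G α)^[2] p).2 + (1 - α) * ((G α)^[2] p).1 ≥ 2 * α * (1 - α) ∧
      2 * α * (1 - α) ≥ 2 * α^2 := by
  obtain ⟨hpU, hS⟩ := hp
  obtain ⟨hp1U, hS1⟩ := hp1
  simp only [U, mem_prod, mem_Icc] at hpU
  obtain ⟨⟨hx0, hx1⟩, hy0, hy1⟩ := hpU
  have hSle : S α p ≤ 1 := by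
    simp only [S]; nlinarith
  have h1 : tent (α * p.2 + (1 - α) * p.1) = 2 - 2 * (α * p.2 + (1 - α) * p.1) := by
    rw [tent, if_neg]
    exact not_lt.2 hS
  have h2 : (G α)^[2] p = (tent (α * p.2 + (1 - α) * p.1),
      tent (α * tent (α * p.2 + (1 - α) * p.1) + (1 - α) * p.2)) := by
    simp [Function.iterate_succ, G]
  rw [h2]
  have hS1' : α * tent (α * p.2 + (1 - α) * p.1) + (1 - α) * p.2 < 1/2 := hS1
  have h3 : tent (α * tent (α * p.2 + (1 - α) * p.1) + (1 - α) * p.2)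
      = 2 * (α * tent (α * p.2 + (1 - α) * p.1) + (1 - α) * p.2) := by
    rw [tent, if_pos hS1']
  rw [h3, h1]
  dsimp only
  have h1a : (0:ℝ) ≤ 1 - α := by linarith
  constructor
  · nlinarith [mul_nonneg (mul_nonneg (mul_nonneg hα0.le hα0.le) hα0.le) (sub_nonneg.2 hy1),
      mul_nonneg (mul_nonneg (mul_nonneg hα0.le hα0.le) h1a) (sub_nonneg.2 hx1),
      mul_nonneg (mul_nonneg h1a h1a) (sub_nonneg.2 hx1)]
  · nlinarith
end

section
/- Let 0 < α < 1/2 and let ν be a Borel probability measure on U that is invariant under G_α (the pushforward of ν under G_α equals ν) and ergodic for G_α, and that is not the Dirac point measure at (0,0). Then ν({(x,y) ∈ U : S(x,y) < 2α²}) = 0; equivalently, the support of ν is contained in the region A_I = {(x,y) ∈ U : S(x,y) ≥ 2α²}. -/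
open Set MeasureTheory Filter

lemma tent_eq_abs (x : ℝ) : tent x = 1 - |2*x - 1| := by
  unfold tent
  rcases lt_or_ge x (1/2) with h | h
  · rw [if_pos h, abs_of_neg (by linarith)]; ring
  · rw [if_neg (not_lt.mpr h), abs_of_nonneg (by linarith)]; ring

lemma continuous_tent : Continuous tent := by
  have : tent = fun x => 1 - |2*x - 1| := funext tent_eq_abs
  rw [this]
  continuity

lemma continuous_S (α : ℝ) : Continuous (S α) := by
  unfold S; fun_prop

lemma continuous_G (α : ℝ) : Continuous (G α) := by
  unfold G
  exact continuous_snd.prodMk (continuous_tent.comp (by fun_prop))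

lemma tent_mem {s : ℝ} (h0 : 0 ≤ s) (h1 : s ≤ 1) : tent s ∈ Icc (0:ℝ) 1 := by
  unfold tent
  split <;> constructor <;> linarith

lemma S_mem {α : ℝ} (hα0 : 0 < α) (hα1 : α < 1) {p : ℝ × ℝ} (hp : p ∈ U) :
    S α p ∈ Icc (0:ℝ) 1 := by
  obtain ⟨⟨hx0, hx1⟩, hy0, hy1⟩ := hp
  unfold S
  constructor
  · nlinarith
  · nlinarith

lemma G_mem_U {α : ℝ} (hα0 : 0 < α) (hα1 : α < 1) {p : ℝ × ℝ} (hp : p ∈ U) :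
    G α p ∈ U := by
  have hS := S_mem hα0 hα1 hp
  exact ⟨hp.2, tent_mem hS.1 hS.2⟩

/-- formula for `S (G p)` -/
lemma S_G_eq (α : ℝ) (p : ℝ × ℝ) :
    S α (G α p) = α * tent (S α p) + (1 - α) * p.2 := rfl

lemma S_GG_eq (α : ℝ) (p : ℝ × ℝ) :
    S α (G α (G α p)) = α * tent (S α (G α p)) + (1 - α) * tent (S α p) := rfl

/-- The core inequality, arithmetic form. -/
lemma core_arith {α x y : ℝ} (hα0 : 0 < α) (hα1 : α < 1/2)
    (hx0 : 0 ≤ x) (hx1 : x ≤ 1) (hy0 : 0 ≤ y) (hy1 : y ≤ 1) :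
    min (2*α^2) (2 * min (α*y+(1-α)*x) (α * tent (α*y+(1-α)*x) + (1-α)*y)) ≤
      α * tent (α * tent (α*y+(1-α)*x) + (1-α)*y) + (1-α) * tent (α*y+(1-α)*x) := by
  have hα1' : α < 1 := by linarith
  have hs0m : 0 ≤ α*y+(1-α)*x ∧ α*y+(1-α)*x ≤ 1 := by constructor <;> nlinarith
  have ht0m : tent (α*y+(1-α)*x) ∈ Icc (0:ℝ) 1 := tent_mem hs0m.1 hs0m.2
  set t0 := tent (α*y+(1-α)*x) with ht0def
  have hs1m : 0 ≤ α*t0+(1-α)*y ∧ α*t0+(1-α)*y ≤ 1 := by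
    constructor <;> nlinarith [ht0m.1, ht0m.2]
  rcases lt_or_ge (α*t0+(1-α)*y) (1/2) with h1 | h1
  · -- s1 < 1/2 : tent s1 = 2 s1
    have ht1 : tent (α*t0+(1-α)*y) = 2 * (α*t0+(1-α)*y) := if_pos h1
    rw [ht1]
    rcases lt_or_ge (α*y+(1-α)*x) (1/2) with h0 | h0
    · -- both small : linear regime, doubling
      have ht0 : t0 = 2 * (α*y+(1-α)*x) := if_pos h0
      refine le_trans (min_le_right _ _) ?_
      rcases le_total (α*y+(1-α)*x) (α*t0+(1-α)*y) with h | h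
      · rw [min_eq_left h]; nlinarith
      · rw [min_eq_right h]; nlinarith
    · -- s0 ≥ 1/2, s1 < 1/2 : near the fold
      have ht0 : t0 = 2 - 2 * (α*y+(1-α)*x) := if_neg (not_lt.mpr h0)
      refine le_trans (min_le_left _ _) ?_
      have hA : 2*α*(1 - y) ≤ t0 := by rw [ht0]; nlinarith
      have hB : (1-α) * y ≤ α*t0+(1-α)*y := by nlinarith [ht0m.1]
      nlinarith [mul_le_mul_of_nonneg_left hA (le_of_lt hα0),
        mul_le_mul_of_nonneg_left hB (by linarith : (0:ℝ) ≤ 2*α)]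
  · -- s1 ≥ 1/2
    have ht1 : tent (α*t0+(1-α)*y) = 2 - 2 * (α*t0+(1-α)*y) := if_neg (not_lt.mpr h1)
    rw [ht1]
    refine le_trans (min_le_left _ _) ?_
    have hA : α*t0+(1-α)*y ≤ α * t0 + (1-α) := by nlinarith
    have hkey : 0 ≤ t0 * (1 - α - 2*α^2) := by
      apply mul_nonneg ht0m.1
      nlinarith
    nlinarith [mul_le_mul_of_nonneg_left hA (le_of_lt hα0)]

/-- The core inequality: `S(G² p) ≥ min (2α², 2 min (S p, S (G p)))`. -/
lemma core {α : ℝ} (hα0 : 0 < α) (hα1 : α < 1/2) {p : ℝ × ℝ} (hp : p ∈ U) :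
    min (2*α^2) (2 * min (S α p) (S α (G α p))) ≤ S α (G α (G α p)) := by
  obtain ⟨⟨hx0, hx1⟩, hy0, hy1⟩ := hp
  have e0 : S α p = α * p.2 + (1-α) * p.1 := rfl
  rw [S_GG_eq, S_G_eq, e0]
  exact core_arith hα0 hα1 hx0 hx1 hy0 hy1

noncomputable def psi (α : ℝ) (p : ℝ × ℝ) : ℝ :=
  min (2*α^2) (min (max (S α p) 0) (max (S α (G α p)) 0))

lemma psi_nonneg (α : ℝ) (p : ℝ × ℝ) : 0 ≤ psi α p :=
  le_min (by positivity) (le_min (le_max_right _ _) (le_max_right _ _))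

lemma psi_le (α : ℝ) (p : ℝ × ℝ) : psi α p ≤ 2*α^2 := min_le_left _ _

lemma continuous_psi (α : ℝ) : Continuous (psi α) := by
  unfold psi
  exact (continuous_const.min (((continuous_S α).max continuous_const).min
    (((continuous_S α).comp (continuous_G α)).max continuous_const)))

lemma psi_eq_on_U {α : ℝ} (hα0 : 0 < α) (hα1 : α < 1) {p : ℝ × ℝ} (hp : p ∈ U) :
    psi α p = min (2*α^2) (min (S α p) (S α (G α p))) := by
  unfold psi
  rw [max_eq_left (S_mem hα0 hα1 hp).1, max_eq_left (S_mem hα0 hα1 (G_mem_U hα0 hα1 hp)).1]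

lemma psi_mono {α : ℝ} (hα0 : 0 < α) (hα1 : α < 1/2) {p : ℝ × ℝ} (hp : p ∈ U) :
    psi α p ≤ psi α (G α p) := by
  have hα1' : α < 1 := by linarith
  have hpG : G α p ∈ U := G_mem_U hα0 hα1' hp
  rw [psi_eq_on_U hα0 hα1' hp, psi_eq_on_U hα0 hα1' hpG]
  have hcore := core hα0 hα1 hp
  have h0 : 0 ≤ min (S α p) (S α (G α p)) :=
    le_min (S_mem hα0 hα1' hp).1 (S_mem hα0 hα1' hpG).1
  refine le_min (min_le_left _ _) (le_min ?_ ?_)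
  · exact le_trans (min_le_right _ _) (min_le_right _ _)
  · refine le_trans ?_ hcore
    exact le_min (min_le_left _ _) (le_trans (min_le_right _ _) (by linarith))

lemma psi_double {α : ℝ} (hα0 : 0 < α) (hα1 : α < 1/2) {p : ℝ × ℝ} (hp : p ∈ U) :
    min (2*α^2) (2 * psi α p) ≤ psi α (G α (G α p)) := by
  have hα1' : α < 1 := by linarith
  have hpG : G α p ∈ U := G_mem_U hα0 hα1' hp
  have hpGG : G α (G α p) ∈ U := G_mem_U hα0 hα1' hpG
  have hψle : psi α p ≤ min (S α p) (S α (G α p)) := by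
    rw [psi_eq_on_U hα0 hα1' hp]; exact min_le_right _ _
  have hψG : psi α (G α p) ≤ min (S α (G α p)) (S α (G α (G α p))) := by
    rw [psi_eq_on_U hα0 hα1' hpG]; exact min_le_right _ _
  have hmono := psi_mono hα0 hα1 hp
  have hcore1 := core hα0 hα1 hp
  have hcore2 := core hα0 hα1 hpG
  rw [psi_eq_on_U hα0 hα1' hpGG]
  refine le_min (min_le_left _ _) (le_min ?_ ?_)
  · -- ≤ S (G² p)
    refine le_trans ?_ hcore1
    refine le_min (min_le_left _ _) ?_
    refine le_trans (min_le_right _ _) ?_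
    linarith
  · -- ≤ S (G³ p)
    refine le_trans ?_ hcore2
    refine le_min (min_le_left _ _) ?_
    refine le_trans (min_le_right _ _) ?_
    have h1 : psi α p ≤ S α (G α p) := le_trans hψle (min_le_right _ _)
    have h2 : psi α p ≤ S α (G α (G α p)) :=
      le_trans hmono (le_trans hψG (min_le_right _ _))
    rcases le_total (S α (G α p)) (S α (G α (G α p))) with h | h
    · rw [min_eq_left h]; linarith
    · rw [min_eq_right h]; linarith

lemma eq_zero_of_S_eq {α : ℝ} (hα0 : 0 < α) (hα1 : α < 1) {p : ℝ × ℝ} (hp : p ∈ U)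
    (h : S α p = 0) : p = ((0:ℝ), (0:ℝ)) := by
  obtain ⟨⟨hx0, hx1⟩, hy0, hy1⟩ := hp
  have hs : α * p.2 + (1-α) * p.1 = 0 := h
  have hx : p.1 = 0 := by nlinarith
  have hy : p.2 = 0 := by nlinarith
  exact Prod.ext hx hy

lemma eq_zero_of_S_G_eq {α : ℝ} (hα0 : 0 < α) (hα1 : α < 1) {p : ℝ × ℝ} (hp : p ∈ U)
    (h : S α (G α p) = 0) : p = ((0:ℝ), (0:ℝ)) := by
  obtain ⟨⟨hx0, hx1⟩, hy0, hy1⟩ := hp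
  have hs0m : S α p ∈ Icc (0:ℝ) 1 := S_mem hα0 hα1 ⟨⟨hx0, hx1⟩, hy0, hy1⟩
  have ht0m : tent (S α p) ∈ Icc (0:ℝ) 1 := tent_mem hs0m.1 hs0m.2
  have hs : α * tent (S α p) + (1-α) * p.2 = 0 := h
  have hy : p.2 = 0 := by nlinarith [ht0m.1]
  have ht0 : tent (S α p) = 0 := by nlinarith [ht0m.1]
  have hs0lt : S α p < 1 := by
    show α * p.2 + (1-α) * p.1 < 1
    rw [hy]; nlinarith
  have hs0 : S α p = 0 := by
    by_contra hne
    unfold tent at ht0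
    rcases lt_or_ge (S α p) (1/2) with hc | hc
    · rw [if_pos hc] at ht0; apply hne; linarith
    · rw [if_neg (not_lt.mpr hc)] at ht0; linarith
  exact eq_zero_of_S_eq hα0 hα1 ⟨⟨hx0, hx1⟩, hy0, hy1⟩ hs0

theorem stmt4 (α : ℝ) (hα0 : 0 < α) (hα1 : α < 1/2)
    (ν : Measure (ℝ × ℝ)) [IsProbabilityMeasure ν] (hU : ν U = 1)
    (herg : Ergodic (G α) ν)
    (hdirac : ν ≠ Measure.dirac ((0 : ℝ), (0 : ℝ))) :
    ν {p | p ∈ U ∧ S α p < 2 * α^2} = 0 := by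
  have hα1' : α < 1 := by linarith
  have hGm : Measurable (G α) := (continuous_G α).measurable
  have hψc : Continuous (psi α) := continuous_psi α
  have hψm : Measurable (psi α) := hψc.measurable
  have hUmeas : MeasurableSet U := measurableSet_Icc.prod measurableSet_Icc
  have hUc : ν Uᶜ = 0 := by
    rw [prob_compl_eq_one_sub hUmeas, hU, tsub_self]
  have hUae : ∀ᵐ p ∂ν, p ∈ U := by
    rw [ae_iff]; exact hUc
  -- integrability
  have hψi : Integrable (psi α) ν := by
    refine Integrable.mono' (integrable_const (2*α^2)) hψc.aestronglyMeasurable ?_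
    refine ae_of_all _ fun p => ?_
    rw [Real.norm_eq_abs, abs_of_nonneg (psi_nonneg α p)]
    exact psi_le α p
  have hψGi : Integrable (fun p => psi α (G α p)) ν := by
    refine Integrable.mono' (integrable_const (2*α^2))
      (hψc.comp (continuous_G α)).aestronglyMeasurable ?_
    refine ae_of_all _ fun p => ?_
    rw [Real.norm_eq_abs, abs_of_nonneg (psi_nonneg α _)]
    exact psi_le α _
  have hmap : Measure.map (G α) ν = ν := herg.toMeasurePreserving.map_eq
  have hint : ∫ p, psi α (G α p) ∂ν = ∫ p, psi α p ∂ν := by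
    conv_rhs => rw [← hmap]
    rw [integral_map hGm.aemeasurable hψc.aestronglyMeasurable]
  have hzero : ∫ p, (psi α (G α p) - psi α p) ∂ν = 0 := by
    rw [integral_sub hψGi hψi, hint, sub_self]
  have hnn : 0 ≤ᵐ[ν] fun p => psi α (G α p) - psi α p := by
    filter_upwards [hUae] with p hp
    exact sub_nonneg.2 (psi_mono hα0 hα1 hp)
  have haeeq : (fun p => psi α (G α p) - psi α p) =ᵐ[ν] 0 :=
    (integral_eq_zero_iff_of_nonneg_ae hnn (hψGi.sub hψi)).mp hzero
  have heq1 : ∀ᵐ p ∂ν, psi α (G α p) = psi α p := by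
    filter_upwards [haeeq] with p hp
    have h : psi α (G α p) - psi α p = 0 := hp
    linarith
  have hNmeas : MeasurableSet {p : ℝ × ℝ | ¬ psi α (G α p) = psi α p} :=
    (measurableSet_eq_fun (hψm.comp hGm) hψm).compl
  have heq2 : ∀ᵐ p ∂ν, psi α (G α (G α p)) = psi α (G α p) := by
    rw [ae_iff]
    have hNe : {p : ℝ × ℝ | ¬ psi α (G α (G α p)) = psi α (G α p)} =
        G α ⁻¹' {p : ℝ × ℝ | ¬ psi α (G α p) = psi α p} := rfl
    rw [hNe, herg.toMeasurePreserving.measure_preimage hNmeas.nullMeasurableSet]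
    exact ae_iff.mp heq1
  -- a.e., points of U below the line are the origin
  have hkey : ∀ᵐ p ∂ν, p ∉ {q : ℝ × ℝ | q ∈ U ∧ S α q < 2*α^2 ∧ q ≠ ((0:ℝ),(0:ℝ))} := by
    filter_upwards [hUae, heq1, heq2] with p hpU h1 h2
    rintro ⟨-, hS, hne⟩
    have hψlt : psi α p < 2*α^2 := by
      have : psi α p ≤ max (S α p) 0 := le_trans (min_le_right _ _) (min_le_left _ _)
      rw [max_eq_left (S_mem hα0 hα1' hpU).1] at this
      linarith
    have hd := psi_double hα0 hα1 hpU
    rw [h2, h1] at hd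
    have hψ0 : psi α p = 0 := by
      rcases le_or_gt (2*α^2) (2 * psi α p) with h | h
      · rw [min_eq_left h] at hd; linarith
      · rw [min_eq_right (le_of_lt h)] at hd
        have := psi_nonneg α p; linarith
    have hmin0 : min (max (S α p) 0) (max (S α (G α p)) 0) = 0 := by
      have hle : min (max (S α p) 0) (max (S α (G α p)) 0) ≤ 0 := by
        by_contra h'
        push_neg at h'
        have : 0 < psi α p := lt_min (by positivity) h'
        linarith
      have hge : 0 ≤ min (max (S α p) 0) (max (S α (G α p)) 0) :=
        le_min (le_max_right _ _) (le_max_right _ _)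
      linarith
    have : S α p = 0 ∨ S α (G α p) = 0 := by
      rcases le_total (max (S α p) 0) (max (S α (G α p)) 0) with h | h
      · left
        rw [min_eq_left h, max_eq_left (S_mem hα0 hα1' hpU).1] at hmin0
        exact hmin0
      · right
        rw [min_eq_right h,
          max_eq_left (S_mem hα0 hα1' (G_mem_U hα0 hα1' hpU)).1] at hmin0
        exact hmin0
    rcases this with h | h
    · exact hne (eq_zero_of_S_eq hα0 hα1' hpU h)
    · exact hne (eq_zero_of_S_G_eq hα0 hα1' hpU h)
  have hB0 : ν {q : ℝ × ℝ | q ∈ U ∧ S α q < 2*α^2 ∧ q ≠ ((0:ℝ),(0:ℝ))} = 0 :=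
    measure_eq_zero_iff_ae_notMem.mpr hkey
  -- the origin has measure zero (by ergodicity and non-diracness)
  have h00 : ν {((0:ℝ),(0:ℝ))} = 0 := by
    have hfix : G α ((0:ℝ),(0:ℝ)) = ((0:ℝ),(0:ℝ)) := by
      simp [G, tent]
    have hsub : ({((0:ℝ),(0:ℝ))} : Set (ℝ × ℝ)) ⊆ G α ⁻¹' {((0:ℝ),(0:ℝ))} := by
      intro q hq
      rw [mem_singleton_iff] at hq
      subst hq
      rw [mem_preimage, hfix]
      exact rfl
    rcases herg.ae_empty_or_univ_of_ae_le_preimage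
        (measurableSet_singleton _).nullMeasurableSet (HasSubset.Subset.eventuallyLE hsub) with
      h | h
    · exact ae_eq_empty.mp h
    · exfalso
      have hcompl0 : ν ({((0:ℝ),(0:ℝ))}ᶜ) = 0 := ae_eq_univ.mp h
    -- then ν {0} = 1 and ν = dirac
      have h1 : ν {((0:ℝ),(0:ℝ))} = 1 := by
        have hc := prob_compl_eq_one_sub (μ := ν) (measurableSet_singleton ((0:ℝ),(0:ℝ)))
        rw [hcompl0] at hc
        have hle : ν {((0:ℝ),(0:ℝ))} ≤ 1 := prob_le_one
        have := tsub_eq_zero_iff_le.mp hc.symm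
        exact le_antisymm hle this
      apply hdirac
      ext t ht
      rw [Measure.dirac_apply' _ ht]
      by_cases hmem : ((0:ℝ),(0:ℝ)) ∈ t
      · rw [Set.indicator_of_mem hmem, Pi.one_apply]
        have hge : (1:ENNReal) ≤ ν t := h1 ▸ measure_mono (singleton_subset_iff.2 hmem)
        exact le_antisymm prob_le_one hge
      · rw [Set.indicator_of_notMem hmem]
        refine measure_mono_null (fun q hq => ?_) hcompl0
        simp only [mem_compl_iff, mem_singleton_iff]
        rintro rfl
        exact hmem hq
  -- conclude
  have hsubset : {p : ℝ × ℝ | p ∈ U ∧ S α p < 2 * α^2} ⊆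
      {q : ℝ × ℝ | q ∈ U ∧ S α q < 2*α^2 ∧ q ≠ ((0:ℝ),(0:ℝ))} ∪ {((0:ℝ),(0:ℝ))} := by
    intro p hp
    by_cases h : p = ((0:ℝ),(0:ℝ))
    · right; rw [mem_singleton_iff]; exact h
    · left; exact ⟨hp.1, hp.2, h⟩
  exact measure_mono_null hsubset (measure_union_null hB0 h00)
end

section
/- Let 0 < α < 1/2 and let D₁, D₂ be the 2×2 real matrices D₁ = [[0, 1], [2(1−α), 2α]] and D₂ = [[0, 1], [−2(1−α), −2α]]. Then for every nonzero vector v ∈ ℝ² one has ‖(D₁·D₂·D₂)·v‖ > ‖v‖ and ‖(D₂·D₂·D₂)·v‖ > ‖v‖ in the Euclidean norm; that is, both singular values of D₁D₂D₂ and of D₂D₂D₂ are strictly greater than 1. -/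
open Set MeasureTheory Filter

private lemma posdef (A B C x y : ℝ) (hA : 0 < A) (hD : 0 < A * C - B ^ 2)
    (hxy : x ≠ 0 ∨ y ≠ 0) : 0 < A * x ^ 2 + 2 * B * x * y + C * y ^ 2 := by
  rcases eq_or_ne y 0 with hy | hy
  · subst hy
    rcases hxy with hx | hx
    · have hx2 : 0 < x ^ 2 := by positivity
      nlinarith
    · exact absurd rfl hx
  · have hy2 : 0 < y ^ 2 := by positivity
    nlinarith [sq_nonneg (A * x + B * y), mul_pos hD hy2]

private lemma key (a x y : ℝ) (h0 : 0 < a) (h1 : a < 1/2) (hxy : x ≠ 0 ∨ y ≠ 0) :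
    x ^ 2 + y ^ 2 <
      ((4*a - 4*a^2) * x + (-2 + 2*a + 4*a^2) * y) ^ 2 +
      ((-4 + 8*a + 4*a^2 - 8*a^3) * x + (-8*a + 8*a^2 + 8*a^3) * y) ^ 2 := by
  set p : ℝ := 4*a - 4*a^2 with hp
  set q : ℝ := -2 + 2*a + 4*a^2 with hq
  set r : ℝ := -4 + 8*a + 4*a^2 - 8*a^3 with hr
  set s : ℝ := -8*a + 8*a^2 + 8*a^3 with hs
  have h2a : 0 < 1 - 2*a := by linarith
  have hA : 0 < p ^ 2 + r ^ 2 - 1 := by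
    have hg : 0 < 15 - 4*a - 28*a^2 + 16*a^4 := by nlinarith
    have : p ^ 2 + r ^ 2 - 1 = (1 - 2*a)^2 * (15 - 4*a - 28*a^2 + 16*a^4) := by
      rw [hp, hr]; ring
    rw [this]; positivity
  have hD : 0 < (p ^ 2 + r ^ 2 - 1) * (q ^ 2 + s ^ 2 - 1) - (p*q + r*s) ^ 2 := by
    have hh : 0 < 45 - 42*a + 68*a^2 + 8*a^3 := by nlinarith
    have : (p ^ 2 + r ^ 2 - 1) * (q ^ 2 + s ^ 2 - 1) - (p*q + r*s) ^ 2 =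
        (1 - 2*a)^3 * (45 - 42*a + 68*a^2 + 8*a^3) := by
      rw [hp, hq, hr, hs]; ring
    rw [this]; positivity
  have := posdef (p ^ 2 + r ^ 2 - 1) (p*q + r*s) (q ^ 2 + s ^ 2 - 1) x y hA hD hxy
  nlinarith [this]

theorem stmt5 (α : ℝ) (hα0 : 0 < α) (hα1 : α < 1/2)
    (D1 D2 : Matrix (Fin 2) (Fin 2) ℝ)
    (hD1 : D1 = !![0, 1; 2*(1-α), 2*α])
    (hD2 : D2 = !![0, 1; -(2*(1-α)), -(2*α)])
    (v : Fin 2 → ℝ) (hv : v ≠ 0) :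
    Real.sqrt (((D1 * D2 * D2).mulVec v 0)^2 + ((D1 * D2 * D2).mulVec v 1)^2) >
        Real.sqrt ((v 0)^2 + (v 1)^2) ∧
      Real.sqrt (((D2 * D2 * D2).mulVec v 0)^2 + ((D2 * D2 * D2).mulVec v 1)^2) >
        Real.sqrt ((v 0)^2 + (v 1)^2) := by

  subst hD1 hD2
  have hxy : v 0 ≠ 0 ∨ v 1 ≠ 0 := by
    by_contra h
    push_neg at h
    apply hv
    funext i
    fin_cases i <;> simp [h.1, h.2]
  have hk := key α (v 0) (v 1) hα0 hα1 hxy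
  have hnn : (0:ℝ) ≤ (v 0) ^ 2 + (v 1) ^ 2 := by positivity
  constructor <;>
  · apply Real.sqrt_lt_sqrt hnn
    refine lt_of_lt_of_le hk (le_of_eq ?_)
    simp [Matrix.mul_apply, Matrix.mulVec, dotProduct, Fin.sum_univ_two,
      Matrix.cons_val_zero, Matrix.cons_val_one, Matrix.head_cons]
    ring
end

section
/- Let (√5 − 1)/4 < α < 1/2. If (x, y) ∈ A₁ and G_α(x, y) ∈ A₂, then G_α²(x, y) ∈ A₂. (A point entering A₂ from A₁ must stay in A₂ for at least 2 steps.) -/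
open Set MeasureTheory Filter

/-! Write `s = S α p` and `p = (x, y)`. On `A₁` the tent map doubles, so `G p = (y, 2s)`; on `A₂` it
reflects, so `G² p = (2s, 2 - 2T)` with `T = 2αs + (1-α)y`. Then
`S α (G² p) - 1/2 = 2(1-2α)(1+α)(s - αy) + 4α³(1-y) + (1-2α)(4α² + 2α - 1)/2`,
every term is nonnegative since `s ≥ αy`, and the last is positive exactly when `α` exceeds the
root `(√5 - 1)/4` of `4α² + 2α - 1`. -/

lemma pos_of_sqrt_five_sub_one_div_four_lt {α : ℝ} (h : (Real.sqrt 5 - 1) / 4 < α) : 0 < α := by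
  have : 1 < Real.sqrt 5 := (Real.lt_sqrt zero_le_one).2 (by norm_num)
  linarith

lemma four_mul_sq_add_two_mul_sub_one_pos {α : ℝ} (h : (Real.sqrt 5 - 1) / 4 < α) :
    0 < 4 * α ^ 2 + 2 * α - 1 := by
  have h5 : Real.sqrt 5 < 4 * α + 1 := by linarith
  have := (Real.sqrt_lt' (by linarith [Real.sqrt_nonneg 5])).1 h5
  nlinarith

lemma tent_of_lt_half {x : ℝ} (hx : x < 1 / 2) : tent x = 2 * x := if_pos hx

lemma tent_of_half_le {x : ℝ} (hx : 1 / 2 ≤ x) : tent x = 2 - 2 * x := if_neg (not_lt.2 hx)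

lemma G_eq_of_S_lt_half {α : ℝ} {p : ℝ × ℝ} (h : S α p < 1 / 2) : G α p = (p.2, 2 * S α p) :=
  congrArg (p.2, ·) (tent_of_lt_half h)

lemma G_eq_of_half_le_S {α : ℝ} {p : ℝ × ℝ} (h : 1 / 2 ≤ S α p) :
    G α p = (p.2, 2 - 2 * S α p) :=
  congrArg (p.2, ·) (tent_of_half_le h)

lemma S_le_one {α : ℝ} {p : ℝ × ℝ} (hα0 : 0 ≤ α) (hα1 : α ≤ 1) (hp : p ∈ U) : S α p ≤ 1 := by
  obtain ⟨⟨-, hx⟩, -, hy⟩ := hp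
  unfold S
  nlinarith

lemma half_le_S_two_step {α : ℝ} (hα0 : 0 ≤ α) (hα1 : α < 1 / 2) (hquad : 0 < 4 * α ^ 2 + 2 * α - 1)
    {p : ℝ × ℝ} (hx : 0 ≤ p.1) (hy : p.2 ≤ 1) :
    1 / 2 ≤ S α (2 * S α p, 2 - 2 * S α (p.2, 2 * S α p)) := by
  have hsy : α * p.2 ≤ S α p := by unfold S; nlinarith
  have key : S α (2 * S α p, 2 - 2 * S α (p.2, 2 * S α p)) - 1 / 2 =
      2 * (1 - 2 * α) * (1 + α) * (S α p - α * p.2) + 4 * α ^ 3 * (1 - p.2)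
        + (1 - 2 * α) * (4 * α ^ 2 + 2 * α - 1) / 2 := by
    simp only [S]; ring
  have : 0 ≤ 2 * (1 - 2 * α) * (1 + α) * (S α p - α * p.2) := by
    have : 0 ≤ 1 - 2 * α := by linarith
    have : 0 ≤ S α p - α * p.2 := by linarith
    positivity
  have : 0 ≤ 4 * α ^ 3 * (1 - p.2) := mul_nonneg (by positivity) (by linarith)
  have : 0 < (1 - 2 * α) * (4 * α ^ 2 + 2 * α - 1) / 2 := by
    have : 0 < 1 - 2 * α := by linarith
    positivity
  linarith

theorem stmt6 (α : ℝ) (hα0 : (Real.sqrt 5 - 1) / 4 < α) (hα1 : α < 1/2)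
    (p : ℝ × ℝ) (hp : p ∈ A1 α) (hp1 : G α p ∈ A2 α) :
    (G α)^[2] p ∈ A2 α := by
  have hαpos := pos_of_sqrt_five_sub_one_div_four_lt hα0
  obtain ⟨⟨⟨hx0, -⟩, -, hy1⟩, hs⟩ := hp
  have hGp := G_eq_of_S_lt_half hs
  rw [hGp] at hp1
  obtain ⟨hGpU, hT⟩ := hp1
  have hT1 := S_le_one hαpos.le (by linarith) hGpU
  rw [Function.iterate_succ_apply', Function.iterate_one, hGp, G_eq_of_half_le_S hT]
  exact ⟨⟨hGpU.2, by linarith, by linarith⟩,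
    half_le_S_two_step hαpos.le hα1 (four_mul_sq_add_two_mul_sub_one_pos hα0) hx0 hy1⟩
end

section
/- Let α₁ be the unique root in (0,1) of 16α⁴ + 16α³ − 52α² + 48α − 9 = 0 (α₁ ≈ 0.24760367) and α₂ the unique root in (0,1) of 16α⁴ − 16α³ + 16α² − 1 = 0 (α₂ ≈ 0.2797707433). For every α with α₁ ≤ α ≤ α₂: if (x, y) ∈ A₂ and G_α(x, y), G_α²(x, y), G_α³(x, y) all lie in A₁, then G_α⁴(x, y) ∈ A₂. (A point originating in A₂ remains in A₁ for at most 3 steps.) -/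
open Set MeasureTheory Filter

lemma alpha1_ge (a : ℝ) (h0 : 0 < a)
    (hr : 16*a^4 + 16*a^3 - 52*a^2 + 48*a - 9 = 0) : 1/5 ≤ a := by
  by_contra h
  push_neg at h
  nlinarith [sq_nonneg a, sq_nonneg (a - 1/5), mul_pos h0 h0,
    mul_nonneg (le_of_lt h0) (sq_nonneg (a-1/5))]

lemma alpha2_le (a : ℝ) (h0 : 0 < a)
    (hr : 16*a^4 - 16*a^3 + 16*a^2 - 1 = 0) : a ≤ 7/25 := by
  by_contra h
  push_neg at h
  nlinarith [sq_nonneg (a - 7/25), mul_pos h0 h0,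
    mul_nonneg (sq_nonneg (a-7/25)) (le_of_lt h0), sq_nonneg a]

lemma coefB (α : ℝ) (h1 : 1/5 ≤ α) (h2 : α ≤ 7/25) :
    0 ≤ 4 - 12*α + 36*α^2 - 52*α^3 + 40*α^4 - 16*α^5 := by
  nlinarith [sq_nonneg α, mul_nonneg (sq_nonneg α) (by linarith : (0:ℝ) ≤ 36 - 52*α),
    mul_nonneg (mul_nonneg (sq_nonneg α) (sq_nonneg α)) (by linarith : (0:ℝ) ≤ 40 - 16*α)]

lemma coefC (α : ℝ) (h1 : 1/5 ≤ α) (h2 : α ≤ 7/25) :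
    0 ≤ 4*α - 8*α^2 - 12*α^3 + 16*α^4 - 16*α^5 := by
  have h0 : (0:ℝ) ≤ α := by linarith
  nlinarith [mul_nonneg (by linarith : (0:ℝ) ≤ 7/25 - α) h0,
    mul_nonneg h0 (by nlinarith [mul_nonneg (by linarith : (0:ℝ) ≤ 7/25 - α) h0] :
      (0:ℝ) ≤ 1 - 2*α - 3*α^2),
    mul_nonneg (mul_nonneg (mul_nonneg h0 h0) h0) (by linarith : (0:ℝ) ≤ 1 - α)]

lemma coefAB (α : ℝ) (h1 : 1/5 ≤ α) (h2 : α ≤ 7/25) :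
    1/2 ≤ 4*α - 8*α^2 + 28*α^3 - 24*α^4 + 16*α^5 := by
  have h0 : (0:ℝ) ≤ α := by linarith
  nlinarith [sq_nonneg (α-1/5), mul_nonneg (sq_nonneg (α-1/5)) h0, sq_nonneg α,
    mul_nonneg (mul_nonneg h0 h0) h0]

set_option maxHeartbeats 1000000 in
theorem stmt7 (α₁ α₂ : ℝ)
    (hα₁mem : α₁ ∈ Set.Ioo (0:ℝ) 1)
    (hα₁root : 16*α₁^4 + 16*α₁^3 - 52*α₁^2 + 48*α₁ - 9 = 0)
    (hα₂mem : α₂ ∈ Set.Ioo (0:ℝ) 1)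
    (hα₂root : 16*α₂^4 - 16*α₂^3 + 16*α₂^2 - 1 = 0)
    (α : ℝ) (hα : α ∈ Set.Icc α₁ α₂)
    (p : ℝ × ℝ) (hp : p ∈ A2 α)
    (h1 : G α p ∈ A1 α) (h2 : (G α)^[2] p ∈ A1 α) (h3 : (G α)^[3] p ∈ A1 α) :
    (G α)^[4] p ∈ A2 α := by
  have ha1 : 1/5 ≤ α := le_trans (alpha1_ge α₁ hα₁mem.1 hα₁root) hα.1
  have ha2 : α ≤ 7/25 := le_trans hα.2 (alpha2_le α₂ hα₂mem.1 hα₂root)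
  have h0a : (0:ℝ) ≤ α := by linarith
  obtain ⟨x, y⟩ := p
  obtain ⟨hpU, hS0⟩ := hp
  have hx0 : 0 ≤ x := hpU.1.1
  have hx1 : x ≤ 1 := hpU.1.2
  have hy0 : 0 ≤ y := hpU.2.1
  have hy1 : y ≤ 1 := hpU.2.2
  have hS0' : (1/2 : ℝ) ≤ α * y + (1 - α) * x := hS0
  obtain ⟨z1, hz1⟩ : ∃ z : ℝ, z = 2 - 2*(α * y + (1 - α) * x) := ⟨_, rfl⟩
  have e1 : G α (x, y) = (y, z1) := by
    rw [hz1]; simp only [G, tent, if_neg (not_lt.2 hS0')]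
  rw [e1] at h1
  obtain ⟨h1U, hS1⟩ := h1
  have hS1' : α * z1 + (1 - α) * y < 1/2 := hS1
  obtain ⟨z2, hz2⟩ : ∃ z : ℝ, z = 2*(α * z1 + (1 - α) * y) := ⟨_, rfl⟩
  have e2 : (G α)^[2] (x, y) = (z1, z2) := by
    rw [Function.iterate_succ_apply', Function.iterate_one, e1, hz2]
    simp only [G, tent, if_pos hS1']
  rw [e2] at h2
  obtain ⟨h2U, hS2⟩ := h2
  have hS2' : α * z2 + (1 - α) * z1 < 1/2 := hS2
  obtain ⟨z3, hz3⟩ : ∃ z : ℝ, z = 2*(α * z2 + (1 - α) * z1) := ⟨_, rfl⟩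
  have e3 : (G α)^[3] (x, y) = (z2, z3) := by
    rw [Function.iterate_succ_apply', e2, hz3]
    simp only [G, tent, if_pos hS2']
  rw [e3] at h3
  obtain ⟨h3U, hS3⟩ := h3
  have hS3' : α * z3 + (1 - α) * z2 < 1/2 := hS3
  obtain ⟨z4, hz4⟩ : ∃ z : ℝ, z = 2*(α * z3 + (1 - α) * z2) := ⟨_, rfl⟩
  have e4 : (G α)^[4] (x, y) = (z3, z4) := by
    rw [Function.iterate_succ_apply', e3, hz4]
    simp only [G, tent, if_pos hS3']
  rw [e4]
  -- basic bounds
  have hS0le : α * y + (1 - α) * x ≤ 1 := by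
    nlinarith [mul_nonneg h0a (by linarith : (0:ℝ) ≤ 1 - y),
      mul_nonneg (by linarith : (0:ℝ) ≤ 1 - α) (by linarith : (0:ℝ) ≤ 1 - x)]
  have hz10 : 0 ≤ z1 := by rw [hz1]; linarith
  have hz11 : z1 ≤ 1 := by rw [hz1]; linarith
  have hs1nn : 0 ≤ α * z1 + (1 - α) * y := by
    have := mul_nonneg h0a hz10
    have := mul_nonneg (by linarith : (0:ℝ) ≤ 1 - α) hy0
    linarith
  have hz20 : 0 ≤ z2 := by rw [hz2]; linarith
  have hz21 : z2 ≤ 1 := by rw [hz2]; linarith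
  have hs2nn : 0 ≤ α * z2 + (1 - α) * z1 := by
    have := mul_nonneg h0a hz20
    have := mul_nonneg (by linarith : (0:ℝ) ≤ 1 - α) hz10
    linarith
  have hz30 : 0 ≤ z3 := by rw [hz3]; linarith
  have hz31 : z3 ≤ 1 := by rw [hz3]; linarith
  have hs3nn : 0 ≤ α * z3 + (1 - α) * z2 := by
    have := mul_nonneg h0a hz30
    have := mul_nonneg (by linarith : (0:ℝ) ≤ 1 - α) hz20
    linarith
  have hz40 : 0 ≤ z4 := by rw [hz4]; linarith
  have hz41 : z4 ≤ 1 := by rw [hz4]; linarith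
  refine ⟨⟨⟨hz30, hz31⟩, ⟨hz40, hz41⟩⟩, ?_⟩
  show (1/2 : ℝ) ≤ α * z4 + (1 - α) * z3
  have hB := coefB α ha1 ha2
  have hC := coefC α ha1 ha2
  have hAB := coefAB α ha1 ha2
  have key : α * z4 + (1 - α) * z3 =
      (4*α - 8*α^2 + 28*α^3 - 24*α^4 + 16*α^5)
      + (4 - 12*α + 36*α^2 - 52*α^3 + 40*α^4 - 16*α^5) * (1 - x)
      + (4*α - 8*α^2 - 12*α^3 + 16*α^4 - 16*α^5) * y := by
    rw [hz4, hz3, hz2, hz1]; ring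
  rw [key]
  nlinarith [mul_nonneg hB (by linarith : (0:ℝ) ≤ 1 - x), mul_nonneg hC hy0, hAB]
end

section
/- Let α₂ be the unique root in (0,1) of 16α⁴ − 16α³ + 16α² − 1 = 0 (α₂ ≈ 0.2797707433). For every α with α₂ ≤ α ≤ 1/3: if (x, y) ∈ A₂ and G_α(x, y), G_α²(x, y) both lie in A₁, then G_α³(x, y) ∈ A₂. (A point coming from A₂ can stay in A₁ for at most 2 steps.) -/
open Set MeasureTheory Filter

set_option maxHeartbeats 800000 in
theorem stmt8 (α₂ : ℝ)
    (hα₂mem : α₂ ∈ Set.Ioo (0:ℝ) 1)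
    (hα₂root : 16*α₂^4 - 16*α₂^3 + 16*α₂^2 - 1 = 0)
    (α : ℝ) (hα : α ∈ Set.Icc α₂ (1/3 : ℝ))
    (p : ℝ × ℝ) (hp : p ∈ A2 α)
    (h1 : G α p ∈ A1 α) (h2 : (G α)^[2] p ∈ A1 α) :
    (G α)^[3] p ∈ A2 α := by
  obtain ⟨hα₂0, hα₂1⟩ := hα₂mem
  obtain ⟨hαl, hαr⟩ := hα
  have hα0 : (0:ℝ) < α := lt_of_lt_of_le hα₂0 hαl
  obtain ⟨x, y⟩ := p
  obtain ⟨⟨⟨hx0, hx1⟩, hy0, hy1⟩, hS⟩ := hp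
  have hS' : α * y + (1 - α) * x ≥ 1/2 := hS
  have hG1 : G α (x, y) = (y, 2 - 2*(α*y + (1-α)*x)) := by
    simp only [G, tent, if_neg (not_lt.mpr hS')]
  rw [hG1] at h1
  obtain ⟨⟨⟨hy0', hy1'⟩, hz10, hz11⟩, hS1⟩ := h1
  have hS1' : α * (2 - 2*(α*y + (1-α)*x)) + (1 - α) * y < 1/2 := hS1
  have hz10' : (0:ℝ) ≤ 2 - 2*(α*y + (1-α)*x) := hz10
  have hG2 : (G α)^[2] (x, y)
      = (2 - 2*(α*y + (1-α)*x), 2*(α * (2 - 2*(α*y + (1-α)*x)) + (1-α)*y)) := by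
    rw [Function.iterate_succ_apply, Function.iterate_one, hG1]
    simp only [G, tent, if_pos hS1']
  rw [hG2] at h2
  obtain ⟨⟨⟨_, _⟩, hz20, hz21⟩, hS2⟩ := h2
  set z1 : ℝ := 2 - 2*(α*y + (1-α)*x) with hz1
  set z2 : ℝ := 2*(α * z1 + (1-α)*y) with hz2
  have hS2' : α * z2 + (1 - α) * z1 < 1/2 := hS2
  have hz20' : (0:ℝ) ≤ z2 := hz20
  have hz21' : z2 ≤ 1 := hz21
  clear_value z1 z2
  have hG3 : (G α)^[3] (x, y) = (z2, 2*(α*z2 + (1-α)*z1)) := by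
    rw [show (3:ℕ) = 1 + 2 from rfl, Function.iterate_add_apply, Function.iterate_one, hG2]
    simp only [G, tent, if_pos hS2']
  rw [hG3]
  have h1α : (0:ℝ) ≤ 1 - α := by linarith
  have hS2nn : α * z2 + (1 - α) * z1 ≥ 0 := by
    have := mul_nonneg hα0.le hz20'
    have := mul_nonneg h1α hz10'
    linarith
  refine ⟨⟨⟨hz20', hz21'⟩, ?_, ?_⟩, ?_⟩
  · show (0:ℝ) ≤ 2*(α*z2 + (1-α)*z1)
    linarith
  · show 2*(α*z2 + (1-α)*z1) ≤ 1
    linarith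
  show α * (2*(α*z2 + (1-α)*z1)) + (1 - α) * z2 ≥ 1/2
  have hq : 16*α^4 - 16*α^3 + 16*α^2 - 1 ≥ 0 := by
    nlinarith [mul_nonneg (sub_nonneg.2 hαl) hα₂0.le,
      mul_nonneg (mul_nonneg (sub_nonneg.2 hαl) hα₂0.le) hα₂0.le,
      mul_nonneg (mul_nonneg (sub_nonneg.2 hαl) hα0.le) hα0.le,
      mul_nonneg (mul_nonneg (mul_nonneg (sub_nonneg.2 hαl) hα0.le) hα0.le) hα₂0.le,
      mul_nonneg (mul_nonneg (mul_nonneg (sub_nonneg.2 hαl) hα0.le) hα₂0.le) hα₂0.le]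
  have t1 : (1 - y) * (16*α^4 - 16*α^3 + 16*α^2 - 1) ≥ 0 :=
    mul_nonneg (by linarith) hq
  have hB : 3 - 8*α + 12*α^2 - 8*α^3 ≥ 0 := by nlinarith [sq_nonneg α, hα0.le]
  have t2 : y * (3 - 8*α + 12*α^2 - 8*α^3) ≥ 0 := mul_nonneg hy0 hB
  have hc : 8*α*(1-α)*(α^2 - α + 1) ≥ 0 := by nlinarith [sq_nonneg (α - 1/2)]
  have t3 : 8*α*(1-α)*(α^2 - α + 1) * (1 - x) ≥ 0 := mul_nonneg hc (by linarith)
  have key : α * (2*(α*z2 + (1-α)*z1)) + (1 - α) * z2 - 1/2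
      = (1/2) * ((1 - y) * (16*α^4 - 16*α^3 + 16*α^2 - 1))
        + (1/2) * (y * (3 - 8*α + 12*α^2 - 8*α^3))
        + 8*α*(1-α)*(α^2 - α + 1) * (1 - x) := by
    rw [hz2, hz1]; ring
  linarith [t1, t2, t3, key]
end

section
/- Let 1/3 < α < 1/2. If (x, y) ∈ A₂ and G_α(x, y) ∈ A₁, then G_α²(x, y) ∈ A₂. (A point coming from A₂ can stay in A₁ for at most 1 step.) -/
open Set MeasureTheory Filter

theorem stmt9 (α : ℝ) (hα0 : 1/3 < α) (hα1 : α < 1/2)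
    (p : ℝ × ℝ) (hp : p ∈ A2 α) (h1 : G α p ∈ A1 α) :
    (G α)^[2] p ∈ A2 α := by
  obtain ⟨x, y⟩ := p
  obtain ⟨⟨⟨hx0, hx1⟩, hy0, hy1⟩, hS⟩ := hp
  simp only [S] at hS
  try dsimp only at hx0 hx1 hy0 hy1
  have hSnot : ¬ (α * y + (1 - α) * x < 1/2) := not_lt.mpr hS
  have hG1 : G α (x, y) = (y, 2 - 2 * (α * y + (1 - α) * x)) := by
    simp only [G]; rw [tent, if_neg hSnot]
  rw [hG1] at h1
  obtain ⟨⟨⟨_, _⟩, _, _⟩, hS1⟩ := h1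
  simp only [S] at hS1
  have hS1' : α * (2 - 2 * (α * y + (1 - α) * x)) + (1 - α) * y < 1/2 := hS1
  have hG2 : (G α)^[2] (x, y) = (2 - 2 * (α * y + (1 - α) * x),
      2 * (α * (2 - 2 * (α * y + (1 - α) * x)) + (1 - α) * y)) := by
    rw [Function.iterate_succ, Function.iterate_one, Function.comp_apply, hG1]
    simp only [G]; rw [tent, if_pos hS1']
  rw [hG2]
  have hS01 : α * y + (1 - α) * x ≤ 1 := by nlinarith
  have hS1nn : 0 ≤ α * (2 - 2 * (α * y + (1 - α) * x)) + (1 - α) * y := by nlinarith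
  have hαnn : (0:ℝ) ≤ α := by linarith
  constructor
  · constructor
    · constructor <;> try dsimp only <;> nlinarith
    · constructor <;> try dsimp only <;> nlinarith
  · simp only [S]
    try dsimp only
    nlinarith [sq_nonneg (α * y + (1 - α) * x - 1/2), sq_nonneg (2*α - 1),
      mul_nonneg hy0 hαnn, sq_nonneg (x - 1), sq_nonneg α,
      mul_nonneg (mul_nonneg hy0 hαnn) hαnn,
      mul_nonneg (sub_nonneg.mpr hx1) hαnn]
end

section
/- Let α = 1/2. For every (x, y) ∈ [0,1]×[0,1] with x + y ≥ 1, we have G_{1/2}³(x, y) = (x, y); explicitly, G_{1/2}(x,y) = (y, 2−x−y), G_{1/2}²(x,y) = (2−x−y, x) and G_{1/2}³(x,y) = (x, y). In particular every such point is periodic with period dividing 3. -/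
open Set MeasureTheory Filter

theorem stmt14 (p : ℝ × ℝ) (hp : p ∈ U) (hsum : p.1 + p.2 ≥ 1) :
    G (1/2) p = (p.2, 2 - p.1 - p.2) ∧
      (G (1/2))^[2] p = (2 - p.1 - p.2, p.1) ∧
      (G (1/2))^[3] p = p := by
  obtain ⟨⟨hx0, hx1⟩, hy0, hy1⟩ := hp
  have h1 : G (1/2) p = (p.2, 2 - p.1 - p.2) := by
    simp only [G, tent]
    rw [if_neg (by linarith)]
    norm_num; ring
  have h2 : (G (1/2))^[2] p = (2 - p.1 - p.2, p.1) := by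
    rw [Function.iterate_succ_apply, Function.iterate_one, h1]
    simp only [G, tent]
    rw [if_neg (show ¬((1:ℝ)/2 * (2 - p.1 - p.2) + (1-1/2) * p.2 < 1/2) by push_neg; linarith)]
    norm_num; ring
  have h3 : (G (1/2))^[3] p = p := by
    rw [Function.iterate_succ_apply', h2]
    simp only [G, tent]
    rw [if_neg (show ¬((1:ℝ)/2 * p.1 + (1-1/2) * (2 - p.1 - p.2) < 1/2) by push_neg; linarith)]
    rw [Prod.ext_iff]
    constructor <;> norm_num <;> ring
  exact ⟨h1, h2, h3⟩
end

section
/- Let α = 1/2. For every (x, y) ∈ [0,1]×[0,1] with (x, y) ≠ (0, 0), the orbit of (x, y) under G_{1/2} is eventually periodic with period 3: there exists n ≥ 0 such that G_{1/2}^{n+3}(x, y) = G_{1/2}^{n}(x, y). Equivalently, there exists n ≥ 0 such that the point (u, v) = G_{1/2}^{n}(x, y) satisfies u + v ≥ 1. -/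
open Set MeasureTheory Filter

lemma memU_iff (p : ℝ × ℝ) : p ∈ U ↔ 0 ≤ p.1 ∧ p.1 ≤ 1 ∧ 0 ≤ p.2 ∧ p.2 ≤ 1 := by
  simp only [U, Set.mem_prod, Set.mem_Icc]; tauto

lemma G_small (p : ℝ × ℝ) (h : p.1 + p.2 < 1) (h0 : 0 ≤ p.1) (h0' : 0 ≤ p.2) :
    G (1/2) p = (p.2, p.1 + p.2) := by
  have harg : (1/2 : ℝ) * p.2 + (1 - 1/2) * p.1 < 1/2 := by linarith
  simp only [G, tent, if_pos harg]
  norm_num; ring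

lemma G3_big (p : ℝ × ℝ) (hp : p ∈ U) (h : 1 ≤ p.1 + p.2) :
    (G (1/2))^[3] p = p := by
  rw [memU_iff] at hp
  obtain ⟨h1, h2, h3, h4⟩ := hp
  have e1 : G (1/2) p = (p.2, 2 - (p.1 + p.2)) := by
    have : ¬ ((1/2 : ℝ) * p.2 + (1 - 1/2) * p.1 < 1/2) := by push_neg; linarith
    simp only [G, tent, if_neg this]
    norm_num; ring
  show G (1/2) (G (1/2) (G (1/2) p)) = p
  rw [e1]
  have e2 : G (1/2) (p.2, 2 - (p.1 + p.2)) = (2 - (p.1 + p.2), p.1) := by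
    have : ¬ ((1/2 : ℝ) * (2 - (p.1 + p.2)) + (1 - 1/2) * p.2 < 1/2) := by
      push_neg; linarith
    simp only [G, tent, if_neg this]
    norm_num; ring
  rw [e2]
  have e3 : G (1/2) (2 - (p.1 + p.2), p.1) = (p.1, p.2) := by
    have : ¬ ((1/2 : ℝ) * p.1 + (1 - 1/2) * (2 - (p.1 + p.2)) < 1/2) := by
      push_neg; linarith
    simp only [G, tent, if_neg this]
    norm_num; ring
  rw [e3]

lemma key_s15 : ∀ k : ℕ, ∀ p : ℝ × ℝ, p ∈ U → 1 ≤ 2^k * (p.1 + p.2) →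
    ∃ n : ℕ, (G (1/2))^[n] p ∈ U ∧ 1 ≤ ((G (1/2))^[n] p).1 + ((G (1/2))^[n] p).2 := by
  intro k
  induction k with
  | zero =>
    intro p hp h
    exact ⟨0, hp, by simpa using h⟩
  | succ k ih =>
    intro p hp h
    rw [memU_iff] at hp
    obtain ⟨h1, h2, h3, h4⟩ := hp
    by_cases hs : 1 ≤ p.1 + p.2
    · exact ⟨0, by rw [memU_iff]; exact ⟨h1, h2, h3, h4⟩, by simpa using hs⟩
    push_neg at hs
    have e1 : G (1/2) p = (p.2, p.1 + p.2) := G_small p hs h1 h3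
    by_cases hs1 : 1 ≤ p.2 + (p.1 + p.2)
    · refine ⟨1, ?_, ?_⟩
      · simp only [Function.iterate_one, e1]
        rw [memU_iff]
        refine ⟨h3, h4, ?_, ?_⟩ <;> dsimp only <;> linarith
      · simp only [Function.iterate_one, e1]
        exact hs1
    push_neg at hs1
    have e2 : G (1/2) (p.2, p.1 + p.2) = (p.1 + p.2, p.2 + (p.1 + p.2)) := by
      have := G_small (p.2, p.1 + p.2) (by simpa using hs1) h3 (by dsimp only; linarith)
      simpa using this
    set q : ℝ × ℝ := (p.1 + p.2, p.2 + (p.1 + p.2)) with hq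
    have hqU : q ∈ U := by
      rw [memU_iff]
      constructor
      · simp [hq]; linarith
      constructor
      · simp [hq]; linarith
      constructor
      · simp [hq]; linarith
      · simp [hq]; linarith
    have hqs : 1 ≤ 2^k * (q.1 + q.2) := by
      have : (2:ℝ) * (p.1 + p.2) ≤ q.1 + q.2 := by simp [hq]; linarith
      have h2k : (0:ℝ) < 2^k := by positivity
      calc (1:ℝ) ≤ 2^(k+1) * (p.1 + p.2) := h
        _ = 2^k * (2 * (p.1 + p.2)) := by ring
        _ ≤ 2^k * (q.1 + q.2) := by
            exact mul_le_mul_of_nonneg_left this (le_of_lt h2k)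
    obtain ⟨n, hn1, hn2⟩ := ih q hqU hqs
    refine ⟨n + 2, ?_, ?_⟩
    · rw [Function.iterate_add_apply]
      have : (G (1/2))^[2] p = q := by
        show G (1/2) (G (1/2) p) = q
        rw [e1, e2]
      rw [this]; exact hn1
    · rw [Function.iterate_add_apply]
      have : (G (1/2))^[2] p = q := by
        show G (1/2) (G (1/2) p) = q
        rw [e1, e2]
      rw [this]; exact hn2

theorem stmt15 (p : ℝ × ℝ) (hp : p ∈ U) (hne : p ≠ (0, 0)) :
    ∃ n : ℕ, (G (1/2))^[n + 3] p = (G (1/2))^[n] p := by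
  have hpU := hp
  rw [memU_iff] at hpU
  obtain ⟨h1, h2, h3, h4⟩ := hpU
  have hs : 0 < p.1 + p.2 := by
    rcases lt_or_eq_of_le h1 with h | h
    · linarith
    rcases lt_or_eq_of_le h3 with h' | h'
    · linarith
    exfalso; exact hne (Prod.ext h.symm h'.symm)
  obtain ⟨k, hk⟩ := pow_unbounded_of_one_lt (1 / (p.1 + p.2)) (by norm_num : (1:ℝ) < 2)
  have hk' : 1 ≤ 2^k * (p.1 + p.2) := by
    rw [div_lt_iff₀ hs] at hk
    linarith
  obtain ⟨n, hn1, hn2⟩ := key_s15 k p hp hk'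
  refine ⟨n, ?_⟩
  have : n + 3 = 3 + n := by ring
  rw [this, Function.iterate_add_apply]
  exact G3_big _ hn1 hn2
end

section
/- Let α = 3/4. For every (x, y) ∈ [0,1]×[0,1] with x + y = 4/3, we have G_{3/4}(x, y) = (y, x); hence G_{3/4}²(x, y) = (x, y), so every point of the line x + y = 4/3 in the unit square is periodic with period 2, except the fixed point (2/3, 2/3). -/
open Set MeasureTheory Filter

lemma G_swap (x y : ℝ) (hx : x ≤ 1) (hsum : x + y = 4/3) :
    G (3/4) (x, y) = (y, x) := by
  have hy : y ≥ 1/3 := by linarith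
  have hS : ¬ ((3/4 : ℝ) * y + (1 - 3/4) * x < 1/2) := by push_neg; linarith
  simp only [G, tent, hS, if_false]
  have : 2 - 2 * (3/4 * y + (1 - 3/4) * x) = x := by linarith
  rw [this]

theorem stmt16 (p : ℝ × ℝ) (hp : p ∈ U) (hsum : p.1 + p.2 = 4/3) :
    G (3/4) p = (p.2, p.1) ∧ (G (3/4))^[2] p = p := by
  obtain ⟨⟨hx0, hx1⟩, ⟨hy0, hy1⟩⟩ := hp
  have h1 : G (3/4) p = (p.2, p.1) := by
    rw [show p = (p.1, p.2) from rfl] at *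
    exact G_swap p.1 p.2 hx1 hsum
  refine ⟨h1, ?_⟩
  rw [Function.iterate_succ, Function.iterate_one, Function.comp_apply, h1,
    G_swap p.2 p.1 hy1 (by linarith)]
end

section
/- Let α = 3/4. For every (x, y) ∈ [0,1]×[0,1] with (x, y) ≠ (0, 0), the orbit of (x, y) under G_{3/4} is attracted to the line x + y = 4/3 of periodic points: writing (x_n, y_n) = G_{3/4}^{n}(x, y), one has |x_n + y_n − 4/3| → 0 as n → ∞. -/
open Set MeasureTheory Filter

/-! ### Auxiliary lemmas -/

lemma G_eval (x y : ℝ) :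
    G (3/4) (x, y) = (y, if x + 3*y < 2 then (x + 3*y)/2 else 2 - (x + 3*y)/2) := by
  simp only [G, tent]
  have h : (3/4 : ℝ) * y + (1 - 3/4) * x = (x + 3*y)/4 := by ring
  rw [h]
  split_ifs with h1 h2 h3 <;> [skip; linarith; linarith; skip] <;>
    exact Prod.ext rfl (by ring)

lemma G_cases (p : ℝ × ℝ) :
    (p.1 + 3*p.2 < 2 ∧ G (3/4) p = (p.2, (p.1 + 3*p.2)/2)) ∨
    (2 ≤ p.1 + 3*p.2 ∧ G (3/4) p = (p.2, 2 - (p.1 + 3*p.2)/2)) := by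
  obtain ⟨x, y⟩ := p
  by_cases h : x + 3*y < 2
  · exact Or.inl ⟨h, by rw [G_eval, if_pos h]⟩
  · exact Or.inr ⟨by simpa using not_lt.1 h, by rw [G_eval, if_neg h]⟩

lemma U_mem {p : ℝ × ℝ} (h : p ∈ U) : 0 ≤ p.1 ∧ p.1 ≤ 1 ∧ 0 ≤ p.2 ∧ p.2 ≤ 1 := by
  obtain ⟨⟨h1, h2⟩, ⟨h3, h4⟩⟩ := h
  exact ⟨h1, h2, h3, h4⟩

lemma U_inv {p : ℝ × ℝ} (h : p ∈ U) : G (3/4) p ∈ U := by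
  obtain ⟨h1, h2, h3, h4⟩ := U_mem h
  rcases G_cases p with ⟨c, e⟩ | ⟨c, e⟩ <;> rw [e] <;>
    exact ⟨⟨by linarith, by linarith⟩, ⟨by linarith, by linarith⟩⟩

lemma grow {p : ℝ × ℝ} (h : p ∈ U) :
    |(G (3/4) p).1 + (G (3/4) p).2 - 4/3| ≤ 5/2 * |p.1 + p.2 - 4/3| := by
  obtain ⟨h1, h2, h3, h4⟩ := U_mem h
  rcases G_cases p with ⟨c, e⟩ | ⟨c, e⟩ <;> rw [e] <;> dsimp only <;>
    rcases abs_cases (p.1 + p.2 - 4/3) with ⟨heq, hsgn⟩ | ⟨heq, hsgn⟩ <;>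
    rw [heq, abs_le] <;> constructor <;> linarith

lemma enter {p : ℝ × ℝ} (h : p ∈ U) (hc : 2 ≤ p.1 + 3*p.2) :
    |(G (3/4) p).1 + (G (3/4) p).2 - 4/3| ≤ 1/3 := by
  obtain ⟨h1, h2, h3, h4⟩ := U_mem h
  rcases G_cases p with ⟨c, e⟩ | ⟨c, e⟩ <;> rw [e] <;> dsimp only <;>
    rw [abs_le] <;> constructor <;> linarith

set_option maxHeartbeats 1000000 in
/-- The key three–step contraction: if `|x + y - 4/3| ≤ 1/3` on the unit square, then after
three steps of `G (3/4)` the deviation from `4/3` shrinks by a factor of at least `2/3`. -/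
lemma key3x (x y : ℝ) (hx0 : 0 ≤ x) (hx1 : x ≤ 1) (hy0 : 0 ≤ y) (hy1 : y ≤ 1)
    (he : |x + y - 4/3| ≤ 1/3) :
    |((G (3/4))^[3] (x,y)).1 + ((G (3/4))^[3] (x,y)).2 - 4/3| ≤ 2/3 * |x + y - 4/3| := by
  have h3 : (G (3/4))^[3] (x,y) = G (3/4) (G (3/4) (G (3/4) (x,y))) := by
    rw [Function.iterate_succ_apply', Function.iterate_succ_apply',
      Function.iterate_one]
  rw [abs_le] at he
  rw [h3]
  rcases G_cases (x, y) with ⟨c1, e1⟩ | ⟨c1, e1⟩ <;> dsimp only at c1 <;> rw [e1]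
  · rcases G_cases (y, (x + 3*y)/2) with ⟨c2, e2⟩ | ⟨c2, e2⟩ <;> dsimp only at c2 <;> rw [e2]
    · rcases G_cases ((x + 3*y)/2, (y + 3*((x + 3*y)/2))/2) with ⟨c3, e3⟩ | ⟨c3, e3⟩ <;>
        dsimp only at c3 <;> rw [e3] <;> dsimp only <;>
        rcases abs_cases (x + y - 4/3) with ⟨heq, hsgn⟩ | ⟨heq, hsgn⟩ <;>
        rw [heq, abs_le] <;> constructor <;> linarith
    · rcases G_cases ((x + 3*y)/2, 2 - (y + 3*((x + 3*y)/2))/2) with ⟨c3, e3⟩ | ⟨c3, e3⟩ <;>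
        dsimp only at c3 <;> rw [e3] <;> dsimp only <;>
        rcases abs_cases (x + y - 4/3) with ⟨heq, hsgn⟩ | ⟨heq, hsgn⟩ <;>
        rw [heq, abs_le] <;> constructor <;> linarith
  · rcases G_cases (y, 2 - (x + 3*y)/2) with ⟨c2, e2⟩ | ⟨c2, e2⟩ <;> dsimp only at c2 <;> rw [e2]
    · rcases G_cases (2 - (x + 3*y)/2, (y + 3*(2 - (x + 3*y)/2))/2) with ⟨c3, e3⟩ | ⟨c3, e3⟩ <;>
        dsimp only at c3 <;> rw [e3] <;> dsimp only <;>
        rcases abs_cases (x + y - 4/3) with ⟨heq, hsgn⟩ | ⟨heq, hsgn⟩ <;>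
        rw [heq, abs_le] <;> constructor <;> linarith
    · rcases G_cases (2 - (x + 3*y)/2, 2 - (y + 3*(2 - (x + 3*y)/2))/2) with ⟨c3, e3⟩ | ⟨c3, e3⟩ <;>
        dsimp only at c3 <;> rw [e3] <;> dsimp only <;>
        rcases abs_cases (x + y - 4/3) with ⟨heq, hsgn⟩ | ⟨heq, hsgn⟩ <;>
        rw [heq, abs_le] <;> constructor <;> linarith

lemma key3' {p : ℝ × ℝ} (h : p ∈ U) (he : |p.1 + p.2 - 4/3| ≤ 1/3) :
    |((G (3/4))^[3] p).1 + ((G (3/4))^[3] p).2 - 4/3| ≤ 2/3 * |p.1 + p.2 - 4/3| := by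
  obtain ⟨x, y⟩ := p
  obtain ⟨h1, h2, h3, h4⟩ := U_mem h
  exact key3x x y h1 h2 h3 h4 he

lemma iter_mem_U {p : ℝ × ℝ} (h : p ∈ U) : ∀ n, (G (3/4))^[n] p ∈ U := by
  intro n
  induction n with
  | zero => simpa using h
  | succ n ih => rw [Function.iterate_succ_apply']; exact U_inv ih

lemma escape {p : ℝ × ℝ} (hU : p ∈ U) (hne : p ≠ (0, 0)) :
    ∃ N, 2 ≤ ((G (3/4))^[N] p).1 + 3 * ((G (3/4))^[N] p).2 := by
  by_contra hcon
  push_neg at hcon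
  have hUn := iter_mem_U hU
  have h1 := (U_mem hU).1
  have h3 := (U_mem hU).2.2.1
  have hq0 : 0 < p.1 + 7/2 * p.2 := by
    by_contra hle
    push_neg at hle
    have e1 : p.1 = 0 := le_antisymm (by linarith) h1
    have e2 : p.2 = 0 := le_antisymm (by linarith) h3
    exact hne (Prod.ext_iff.2 ⟨by simpa using e1, by simpa using e2⟩)
  have hq : ∀ n, (7/4 : ℝ)^n * (p.1 + 7/2 * p.2) ≤
      ((G (3/4))^[n] p).1 + 7/2 * ((G (3/4))^[n] p).2 := by
    intro n
    induction n with
    | zero => simp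
    | succ n ih =>
      have h2 := (U_mem (hUn n)).2.2.1
      rcases G_cases ((G (3/4))^[n] p) with ⟨c, e⟩ | ⟨c, e⟩
      · rw [Function.iterate_succ_apply', e]
        dsimp only
        rw [pow_succ]
        nlinarith [pow_nonneg (by norm_num : (0:ℝ) ≤ 7/4) n]
      · exact absurd (hcon n) (not_lt.2 c)
  obtain ⟨n, hn⟩ := pow_unbounded_of_one_lt ((9/2) / (p.1 + 7/2 * p.2))
    (by norm_num : (1:ℝ) < 7/4)
  have hb : ((G (3/4))^[n] p).1 + 7/2 * ((G (3/4))^[n] p).2 ≤ 9/2 := by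
    obtain ⟨a1, a2, a3, a4⟩ := U_mem (hUn n); linarith
  have : 9/2 < (7/4 : ℝ)^n * (p.1 + 7/2 * p.2) := by
    rw [div_lt_iff₀ hq0] at hn; linarith
  linarith [hq n]

theorem stmt17 (p : ℝ × ℝ) (hp : p ∈ U) (hne : p ≠ (0, 0)) :
    Tendsto (fun n : ℕ => |((G (3/4))^[n] p).1 + ((G (3/4))^[n] p).2 - 4/3|)
      atTop (nhds 0) := by
  have hUn := iter_mem_U hp
  obtain ⟨N, hN⟩ := escape hp hne
  set E : ℕ → ℝ := fun n => |((G (3/4))^[n] p).1 + ((G (3/4))^[n] p).2 - 4/3| with hE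
  have hE0 : ∀ n, 0 ≤ E n := fun n => abs_nonneg _
  have hEM : E (N + 1) ≤ 1/3 := by
    have h1 : (G (3/4))^[N+1] p = G (3/4) ((G (3/4))^[N] p) :=
      Function.iterate_succ_apply' _ N p
    have := enter (hUn N) (by linarith)
    rw [hE]; dsimp only; rw [h1]; exact this
  have hgrow : ∀ n, E (n+1) ≤ 5/2 * E n := by
    intro n
    have h1 : (G (3/4))^[n+1] p = G (3/4) ((G (3/4))^[n] p) :=
      Function.iterate_succ_apply' _ n p
    have := grow (hUn n)
    rw [hE]; dsimp only; rw [h1]; exact this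
  have hgrowj : ∀ k j, E (k + j) ≤ (5/2)^j * E k := by
    intro k j
    induction j with
    | zero => simp
    | succ j ih =>
      calc E (k + j + 1) ≤ 5/2 * E (k + j) := hgrow _
        _ ≤ 5/2 * ((5/2)^j * E k) := by nlinarith [hE0 (k+j)]
        _ = (5/2)^(j+1) * E k := by ring
  set M := N + 1 with hM
  have hblock : ∀ m, E (M + 3*m) ≤ (2/3)^m * (1/3) := by
    intro m
    induction m with
    | zero => simpa using hEM
    | succ m ih =>
      have hpow1 : (2/3 : ℝ)^m ≤ 1 := pow_le_one₀ (by norm_num) (by norm_num)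
      have hle : E (M + 3*m) ≤ 1/3 := by nlinarith
      have h1 : (G (3/4))^[M + 3*(m+1)] p = (G (3/4))^[3] ((G (3/4))^[M + 3*m] p) := by
        rw [show M + 3*(m+1) = 3 + (M + 3*m) by ring, Function.iterate_add_apply]
      have hk := key3' (hUn (M + 3*m)) hle
      have hstep : E (M + 3*(m+1)) ≤ 2/3 * E (M + 3*m) := by
        rw [hE]; dsimp only; rw [h1]; exact hk
      calc E (M + 3*(m+1)) ≤ 2/3 * E (M + 3*m) := hstep
        _ ≤ 2/3 * ((2/3)^m * (1/3)) := by linarith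
        _ = (2/3)^(m+1) * (1/3) := by ring
  rw [Metric.tendsto_atTop]
  intro ε hε
  obtain ⟨m₀, hm₀⟩ := exists_pow_lt_of_lt_one (show (0:ℝ) < ε/3 by linarith)
    (by norm_num : (2/3 : ℝ) < 1)
  refine ⟨M + 3*m₀, fun n hn => ?_⟩
  have hrep : n = M + 3*((n - M)/3) + (n - M) % 3 := by omega
  have hj3 : (n - M) % 3 ≤ 2 := by omega
  have hmm : m₀ ≤ (n - M)/3 := by omega
  set m := (n - M)/3 with hm
  set j := (n - M) % 3 with hjj
  have h1 : E n ≤ (5/2)^j * E (M + 3*m) := by rw [hrep]; exact hgrowj _ _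
  have h2 : (5/2 : ℝ)^j ≤ (5/2)^2 := pow_le_pow_right₀ (by norm_num) hj3
  have h3 : (2/3 : ℝ)^m ≤ (2/3)^m₀ :=
    pow_le_pow_of_le_one (by norm_num) (by norm_num) hmm
  have h4 := hblock m
  have h5 : E n ≤ 25/4 * ((2/3)^m * (1/3)) := by
    nlinarith [hE0 (M + 3*m), pow_nonneg (by norm_num : (0:ℝ) ≤ 5/2) j]
  have hd : dist (E n) 0 = E n := by
    rw [Real.dist_eq, sub_zero, abs_of_nonneg (hE0 n)]
  show dist (E n) 0 < ε
  rw [hd]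
  nlinarith [pow_nonneg (by norm_num : (0:ℝ) ≤ 2/3) m]
end

section
/- Let 1/2 < α < 3/4. If (x, y) ∈ A₂, then the point (w, z) = G_α(x, y) satisfies α·z + (1−α)·w ≥ 1 − α. Consequently the region A′_I = {(x,y) ∈ U : S(x,y) ≥ 1 − α} satisfies G_α(A′_I) ⊆ A′_I. -/
open Set MeasureTheory Filter

theorem stmt19 (α : ℝ) (hα0 : 1/2 < α) (hα1 : α < 3/4) :
    (∀ p ∈ A2 α, α * (G α p).2 + (1 - α) * (G α p).1 ≥ 1 - α) ∧
      Set.MapsTo (G α) {p | p ∈ U ∧ S α p ≥ 1 - α} {p | p ∈ U ∧ S α p ≥ 1 - α} := by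
  have key : ∀ p : ℝ × ℝ, p ∈ U → S α p ≥ 1/2 →
      α * (G α p).2 + (1 - α) * (G α p).1 ≥ 1 - α := by
    rintro ⟨x, y⟩ ⟨⟨hx0, hx1⟩, ⟨hy0, hy1⟩⟩ hs
    simp only [S] at hs
    simp only [G, tent, if_neg (not_lt.2 hs)]
    nlinarith [mul_nonneg (mul_nonneg (sub_nonneg.2 hy1) (by linarith : (0:ℝ) ≤ 2*α - 1)) (by linarith : (0:ℝ) ≤ α + 1),
      mul_nonneg (mul_nonneg (sub_nonneg.2 hx1) (by linarith : (0:ℝ) ≤ 1 - α)) (by linarith : (0:ℝ) ≤ α)]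
  constructor
  · rintro p ⟨hU, hs⟩
    exact key p hU hs
  · rintro ⟨x, y⟩ ⟨⟨⟨hx0, hx1⟩, ⟨hy0, hy1⟩⟩ , hs⟩
    simp only [S] at hs
    have hsle : α * y + (1 - α) * x ≤ 1 := by nlinarith
    have hsge : (0:ℝ) ≤ α * y + (1 - α) * x := by nlinarith
    constructor
    · constructor
      · exact ⟨hy0, hy1⟩
      · simp only [G, tent]
        split_ifs with h
        · constructor <;> nlinarith
        · constructor <;> nlinarith
    · by_cases h : α * y + (1 - α) * x < 1/2
      · simp only [G, tent, if_pos h, S]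
        nlinarith
      · exact key (x, y) ⟨⟨hx0, hx1⟩, ⟨hy0, hy1⟩⟩ (not_lt.1 h)
end
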